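/- arXiv:1612.07554 — 2 statements merged into one kernel-verified Lean document; each statement's English description precedes it below -/
import Mathlib

section
/- Let A be the generator of a C₀-semigroup T on X and B the generator of a C₀-semigroup S on Y ⊇ X. If S(t)T(t)x = x for all x ∈ X and t ≥ 0, then B is an extension of −A, i.e. D(A) ⊆ D(B) and Bx = −Ax for all x ∈ D(A). -/
open Filter Topology

/-- A `C₀`-semigroup on a normed space. -/
structure C0Semigroup (X : Type*) [NormedAddCommGroup X] [NormedSpace ℂ X] where
  toFun : ℝ → X →L[ℂ] X
  map_zero : toFun 0 = 1
  map_add : ∀ s t : ℝ, 0 ≤ s → 0 ≤ t → toFun (s + t) = (toFun s).comp (toFun t)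
  strongly_continuous : ∀ x : X, ContinuousOn (fun t => toFun t x) (Set.Ici 0)

/-- `A` (with domain `dom`) is the generator of the `C₀`-semigroup `T`. -/
def IsGenerator {X : Type*} [NormedAddCommGroup X] [NormedSpace ℂ X]
    (T : C0Semigroup X) (dom : Set X) (A : X → X) : Prop :=
  (∀ x : X, x ∈ dom ↔
      ∃ y : X, Tendsto (fun t : ℝ => (t : ℂ)⁻¹ • (T.toFun t x - x)) (𝓝[>] 0) (𝓝 y)) ∧
  (∀ x ∈ dom, Tendsto (fun t : ℝ => (t : ℂ)⁻¹ • (T.toFun t x - x)) (𝓝[>] 0) (𝓝 (A x)))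

/-!
Write `w t = t⁻¹ (T(t)x − x)`, so that `w t → Ax` for `x ∈ D(A)`. Applying `S(t)` and using
`S(t)T(t)x = x` gives `t⁻¹ (S(t)x − x) = −S(t)(w t)`. By the uniform boundedness principle
`S(t)` is bounded uniformly for `t ∈ [0, 1]`, so `S(t)` is jointly continuous at `t = 0` and
`S(t)(w t) → Ax`. Hence the difference quotient of `S` at `x` converges to `−Ax`.
-/

namespace C0Semigroup

variable {Y : Type*} [NormedAddCommGroup Y] [NormedSpace ℂ Y] (S : C0Semigroup Y)

theorem tendsto_nhdsGT_zero (y : Y) :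
    Tendsto (fun t => S.toFun t y) (𝓝[>] 0) (𝓝 y) := by
  have h := (S.strongly_continuous y 0 Set.self_mem_Ici).tendsto
  rw [S.map_zero] at h
  simpa using h.mono_left (nhdsWithin_mono _ Set.Ioi_subset_Ici_self)

theorem exists_norm_le_of_mem_Icc [CompleteSpace Y] (τ : ℝ) :
    ∃ M, ∀ t : Set.Icc (0 : ℝ) τ, ‖S.toFun t‖ ≤ M := by
  refine banach_steinhaus fun y => ?_
  obtain ⟨C, hC⟩ := isCompact_Icc.exists_bound_of_continuousOn
    ((S.strongly_continuous y).mono fun t (ht : t ∈ Set.Icc 0 τ) => ht.1)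
  exact ⟨C, fun t => hC t t.2⟩

theorem tendsto_apply_of_tendsto [CompleteSpace Y] {u : ℝ → Y} {y : Y}
    (hu : Tendsto u (𝓝[>] 0) (𝓝 y)) :
    Tendsto (fun t => S.toFun t (u t)) (𝓝[>] 0) (𝓝 y) := by
  obtain ⟨M, hM⟩ := S.exists_norm_le_of_mem_Icc 1
  have hbound : Tendsto (fun t => M * ‖u t - y‖) (𝓝[>] 0) (𝓝 0) := by
    simpa using ((tendsto_iff_norm_sub_tendsto_zero.mp hu).const_mul M)
  have hsmall : Tendsto (fun t => S.toFun t (u t - y)) (𝓝[>] 0) (𝓝 0) := by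
    refine squeeze_zero_norm' ?_ hbound
    filter_upwards [Ioc_mem_nhdsGT zero_lt_one] with t ht
    calc ‖S.toFun t (u t - y)‖ ≤ ‖S.toFun t‖ * ‖u t - y‖ := (S.toFun t).le_opNorm _
      _ ≤ M * ‖u t - y‖ := by gcongr; exact hM ⟨t, ht.1.le, ht.2⟩
  simpa using hsmall.add (S.tendsto_nhdsGT_zero y)

end C0Semigroup

theorem IsGenerator.mem_and_eq_of_tendsto {Y : Type*} [NormedAddCommGroup Y]
    [NormedSpace ℂ Y] {S : C0Semigroup Y} {dom : Set Y} {B : Y → Y} (hB : IsGenerator S dom B)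
    {y z : Y} (h : Tendsto (fun t : ℝ => (t : ℂ)⁻¹ • (S.toFun t y - y)) (𝓝[>] 0) (𝓝 z)) :
    y ∈ dom ∧ B y = z :=
  have hy : y ∈ dom := (hB.1 y).mpr ⟨z, h⟩
  ⟨hy, tendsto_nhds_unique (hB.2 y hy) h⟩

theorem left_inverse_semigroup_implies_generator_extends_neg_general
    {Y : Type*} [NormedAddCommGroup Y] [NormedSpace ℂ Y] [CompleteSpace Y]
    (X : Submodule ℂ Y)
    (T : C0Semigroup X) (S : C0Semigroup Y)
    (domA : Set X) (Amap : X → X) (domB : Set Y) (Bmap : Y → Y)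
    (hA : IsGenerator T domA Amap) (hB : IsGenerator S domB Bmap)
    (hinv : ∀ (x : X) (t : ℝ), 0 ≤ t → S.toFun t ((T.toFun t x : X) : Y) = (x : Y)) :
    ∀ x ∈ domA, ((x : Y) ∈ domB ∧ Bmap (x : Y) = -(Amap x : Y)) := by
  intro x hx
  have hquotT : Tendsto (fun t : ℝ => (t : ℂ)⁻¹ • (((T.toFun t x : X) : Y) - x))
      (𝓝[>] 0) (𝓝 (Amap x : Y)) := by
    simpa [Function.comp_def] using (continuous_subtype_val.tendsto _).comp (hA.2 x hx)
  refine hB.mem_and_eq_of_tendsto ((S.tendsto_apply_of_tendsto hquotT).neg.congr' ?_)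
  filter_upwards [self_mem_nhdsWithin] with t (ht : 0 < t)
  rw [map_smul, map_sub, hinv x t ht.le, ← smul_neg, neg_sub]

/-- If `S(t)T(t)x = x` for all `x ∈ X` and `t ≥ 0`, then the generator `B` of `S`
is an extension of `−A`, where `A` generates `T` on the closed subspace `X`. -/
theorem left_inverse_semigroup_implies_generator_extends_neg
    {Y : Type*} [NormedAddCommGroup Y] [NormedSpace ℂ Y] [CompleteSpace Y]
    (X : Submodule ℂ Y) [CompleteSpace X]
    (T : C0Semigroup X) (S : C0Semigroup Y)
    (domA : Set X) (Amap : X → X) (domB : Set Y) (Bmap : Y → Y)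
    (hA : IsGenerator T domA Amap) (hB : IsGenerator S domB Bmap)
    (hinv : ∀ (x : X) (t : ℝ), 0 ≤ t → S.toFun t ((T.toFun t x : X) : Y) = (x : Y)) :
    ∀ x ∈ domA, ((x : Y) ∈ domB ∧ Bmap (x : Y) = -(Amap x : Y)) :=
  left_inverse_semigroup_implies_generator_extends_neg_general X T S domA Amap domB Bmap hA hB hinv
end

section
/- Let U be a bounded operator on a Banach space X. If there exists n ∈ ℕ such that max(‖U^{2n}x‖, ‖x‖) ≥ 2‖U^n x‖ for all x ∈ X, then the approximate point spectrum of U does not meet the unit circle. -/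
/-!
If `‖U x - λ x‖ → 0` along unit vectors `x`, then also `‖Uᵏ x - λᵏ x‖ → 0` for every `k`, so for
`|λ| = 1` both `‖Uⁿ x‖` and `‖U²ⁿ x‖` tend to `1`. Passing to the limit in
`2 ‖Uⁿ x‖ ≤ max ‖U²ⁿ x‖ ‖x‖` gives `2 ≤ 1`.
-/

open Filter Topology

namespace ContinuousLinearMap

variable {𝕜 E ι : Type*} [NormedField 𝕜] [NormedAddCommGroup E] [NormedSpace 𝕜 E]
  {T : E →L[𝕜] E} {c : 𝕜} {x : ι → E} {l : Filter ι}

theorem tendsto_pow_apply_sub_smul_nhds_zero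
    (h : Tendsto (fun i => T (x i) - c • x i) l (𝓝 0)) (k : ℕ) :
    Tendsto (fun i => (T ^ k) (x i) - c ^ k • x i) l (𝓝 0) := by
  induction k with
  | zero => simpa using tendsto_const_nhds
  | succ k ih =>
    have hsplit : ∀ i, (T ^ (k + 1)) (x i) - c ^ (k + 1) • x i
        = T ((T ^ k) (x i) - c ^ k • x i) + c ^ k • (T (x i) - c • x i) := fun i => by
      rw [pow_succ' T, pow_succ c, mul_apply_eq_comp, map_sub, map_smul, smul_sub, mul_smul]
      abel
    have hlim := ((T.continuous.tendsto 0).comp ih).add (h.const_smul (c ^ k))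
    rw [Function.comp_def, map_zero, smul_zero, add_zero] at hlim
    exact hlim.congr fun i => (hsplit i).symm

theorem tendsto_norm_pow_apply_nhds_one
    (h : Tendsto (fun i => T (x i) - c • x i) l (𝓝 0)) (hx : ∀ i, ‖x i‖ = 1) (hc : ‖c‖ = 1)
    (k : ℕ) : Tendsto (fun i => ‖(T ^ k) (x i)‖) l (𝓝 1) := by
  rw [tendsto_iff_dist_tendsto_zero]
  refine squeeze_zero (fun _ => dist_nonneg) (fun i => ?_)
    (by simpa only [norm_zero] using (tendsto_pow_apply_sub_smul_nhds_zero h k).norm)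
  have hcx : ‖c ^ k • x i‖ = 1 := by rw [norm_smul, norm_pow, hc, one_pow, one_mul, hx]
  simpa only [Real.dist_eq, hcx] using abs_norm_sub_norm_le ((T ^ k) (x i)) (c ^ k • x i)

end ContinuousLinearMap

theorem quasi_hyperbolic_estimate_implies_no_approx_spectrum_on_circle_general
    {X : Type*} [NormedAddCommGroup X] [NormedSpace ℂ X]
    (U : X →L[ℂ] X)
    (h : ∃ n : ℕ, 0 < n ∧ ∀ x : X, 2 * ‖(U ^ n) x‖ ≤ max ‖(U ^ (2 * n)) x‖ ‖x‖) :
    ∀ l : ℂ, ‖l‖ = 1 →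
      ¬(∀ ε : ℝ, 0 < ε → ∃ x : X, ‖x‖ = 1 ∧ ‖U x - l • x‖ < ε) := by
  obtain ⟨n, -, hU⟩ := h
  intro l hl hap
  choose x hx_norm hx_lt using fun m : ℕ => hap (1 / (m + 1)) Nat.one_div_pos_of_nat
  have happrox : Tendsto (fun m => U (x m) - l • x m) atTop (𝓝 0) :=
    squeeze_zero_norm (fun m => (hx_lt m).le) tendsto_one_div_add_atTop_nhds_zero_nat
  have hlim := U.tendsto_norm_pow_apply_nhds_one happrox hx_norm hl
  have hcontra : 2 * 1 ≤ max 1 (1 : ℝ) :=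
    le_of_tendsto_of_tendsto ((hlim n).const_mul 2) ((hlim (2 * n)).max tendsto_const_nhds)
      (Eventually.of_forall fun m => by simpa [hx_norm m] using hU (x m))
  norm_num at hcontra

/-- If `max(‖U^{2n}x‖, ‖x‖) ≥ 2‖U^n x‖` for all `x` and some `n ≥ 1`, then the
approximate point spectrum of `U` does not meet the unit circle. -/
theorem quasi_hyperbolic_estimate_implies_no_approx_spectrum_on_circle
    {X : Type*} [NormedAddCommGroup X] [NormedSpace ℂ X] [CompleteSpace X]
    (U : X →L[ℂ] X)
    (h : ∃ n : ℕ, 0 < n ∧ ∀ x : X, 2 * ‖(U ^ n) x‖ ≤ max ‖(U ^ (2 * n)) x‖ ‖x‖) :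
    ∀ l : ℂ, ‖l‖ = 1 →
      ¬(∀ ε : ℝ, 0 < ε → ∃ x : X, ‖x‖ = 1 ∧ ‖U x - l • x‖ < ε) :=
  quasi_hyperbolic_estimate_implies_no_approx_spectrum_on_circle_general U h
end
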